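/- If a is a neutral element of a lattice L and x is a modular element of L, then x ⊔ a is a modular element of L. -/

import Mathlib

/-!
Specialising the median identity to comparable arguments shows that a neutral element `a` is
modular and dually modular. Feeding the median of `a, p, q` through dual modularity gives
`(a ⊔ p) ⊓ (a ⊔ q) = a ⊔ p ⊓ q`, and then modularity of `a` yields the distributive law
`(a ⊔ u) ⊓ z = a ⊓ z ⊔ u ⊓ z`. With it, `(x ⊔ a ⊔ y) ⊓ z` splits off `a ⊓ z`, and the
modularity of `x` handles the remaining `(x ⊔ y) ⊓ z`.
-/

section

variable {L : Type*} [Lattice L]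

def IsNeutral (a : L) : Prop :=
  ∀ y z : L, (a ⊔ y) ⊓ (y ⊔ z) ⊓ (z ⊔ a) = (a ⊓ y) ⊔ (y ⊓ z) ⊔ (z ⊓ a)

def IsModularElement (x : L) : Prop :=
  ∀ y z : L, y ≤ z → (x ⊔ y) ⊓ z = (x ⊓ z) ⊔ y

namespace IsNeutral

variable {a : L}

theorem isModularElement (ha : IsNeutral a) : IsModularElement a := by
  intro y z hyz
  calc (a ⊔ y) ⊓ z = (a ⊔ y) ⊓ (y ⊔ z) ⊓ (z ⊔ a) := by order
    _ = (a ⊓ y) ⊔ (y ⊓ z) ⊔ (z ⊓ a) := ha y z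
    _ = (a ⊓ z) ⊔ y := by order

theorem sup_inf_assoc_of_le (ha : IsNeutral a) (s : L) {t : L} (hat : a ≤ t) :
    (a ⊔ s) ⊓ t = a ⊔ s ⊓ t := by
  calc (a ⊔ s) ⊓ t = (a ⊔ s) ⊓ (s ⊔ t) ⊓ (t ⊔ a) := by order
    _ = (a ⊓ s) ⊔ (s ⊓ t) ⊔ (t ⊓ a) := ha s t
    _ = a ⊔ s ⊓ t := by order

theorem sup_inf_left (ha : IsNeutral a) (p q : L) : a ⊔ p ⊓ q = (a ⊔ p) ⊓ (a ⊔ q) := by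
  calc a ⊔ p ⊓ q = a ⊔ ((a ⊓ p) ⊔ (p ⊓ q) ⊔ (q ⊓ a)) := by order
    _ = a ⊔ (a ⊔ p) ⊓ (p ⊔ q) ⊓ (q ⊔ a) := by rw [ha p q]
    _ = a ⊔ (p ⊔ q) ⊓ ((a ⊔ p) ⊓ (a ⊔ q)) := by order
    _ = (a ⊔ (p ⊔ q)) ⊓ ((a ⊔ p) ⊓ (a ⊔ q)) := (ha.sup_inf_assoc_of_le _ (by order)).symm
    _ = (a ⊔ p) ⊓ (a ⊔ q) := by order

theorem inf_sup_right (ha : IsNeutral a) (u z : L) : (a ⊔ u) ⊓ z = a ⊓ z ⊔ u ⊓ z := by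
  calc (a ⊔ u) ⊓ z = (a ⊔ u) ⊓ (a ⊔ z) ⊓ z := by order
    _ = (a ⊔ u ⊓ z) ⊓ z := by rw [ha.sup_inf_left]
    _ = a ⊓ z ⊔ u ⊓ z := ha.isModularElement _ _ inf_le_right

end IsNeutral

end

/-- If `a` is a neutral element and `x` is a modular element of a lattice,
then `x ⊔ a` is a modular element. -/
theorem sup_neutral_modular {L : Type*} [Lattice L] (a x : L)
    (ha : ∀ y z : L, (a ⊔ y) ⊓ (y ⊔ z) ⊓ (z ⊔ a) = (a ⊓ y) ⊔ (y ⊓ z) ⊔ (z ⊓ a))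
    (hx : ∀ y z : L, y ≤ z → (x ⊔ y) ⊓ z = (x ⊓ z) ⊔ y) :
    ∀ y z : L, y ≤ z → ((x ⊔ a) ⊔ y) ⊓ z = ((x ⊔ a) ⊓ z) ⊔ y := by
  have ha : IsNeutral a := ha
  intro y z hyz
  calc (x ⊔ a ⊔ y) ⊓ z = (a ⊔ (x ⊔ y)) ⊓ z := by rw [sup_comm x a, sup_assoc]
    _ = a ⊓ z ⊔ (x ⊔ y) ⊓ z := ha.inf_sup_right _ _
    _ = a ⊓ z ⊔ (x ⊓ z ⊔ y) := by rw [hx y z hyz]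
    _ = (x ⊔ a) ⊓ z ⊔ y := by rw [sup_comm x a, ha.inf_sup_right]; order
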